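/- arXiv:2107.11136 — 3 statements merged into one kernel-verified Lean document; each statement's English description precedes it below -/
import Mathlib

section
/- The Catoni truncation function φ satisfies -log(1 - u + u²/2) ≤ φ(u) ≤ log(1 + u + u²/2) for all real u. -/
noncomputable def phi (x : ℝ) : ℝ :=
  if x < -Real.sqrt 2 then -(2 * Real.sqrt 2 / 3)
  else if x ≤ Real.sqrt 2 then x - x ^ 3 / 6
  else 2 * Real.sqrt 2 / 3

/-! The gap `g x = log (1 + x + x²/2) - (x - x³/6)` has derivative `x³ (x + 2) / (4 (1 + x + x²/2))`,
so on `[-2, ∞)` it is minimal at `0`, where it vanishes; this gives `φ ≤ log (1 + u + u²/2)` on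
`[-√2, √2]`. Outside, `φ` equals its value at `±√2` while `1 + u + u²/2 = ((u + 1)² + 1)/2`
is larger, and the lower bound follows from the upper one because `φ` is odd. -/

open Real

lemma one_add_add_sq_div_two_pos (x : ℝ) : 0 < 1 + x + x ^ 2 / 2 := by
  nlinarith [sq_nonneg (x + 1)]

lemma hasDerivAt_log_sub_cubic (x : ℝ) :
    HasDerivAt (fun x => log (1 + x + x ^ 2 / 2) - (x - x ^ 3 / 6))
      (x ^ 3 * (x + 2) / (4 * (1 + x + x ^ 2 / 2))) x := by
  have hD := one_add_add_sq_div_two_pos x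
  have hquad : HasDerivAt (fun x => 1 + x + x ^ 2 / 2) (1 + x) x :=
    (((hasDerivAt_id x).const_add 1).add ((hasDerivAt_pow 2 x).div_const 2)).congr_deriv
      (by norm_num)
  have hcubic : HasDerivAt (fun x => x - x ^ 3 / 6) (1 - x ^ 2 / 2) x :=
    ((hasDerivAt_id x).sub ((hasDerivAt_pow 3 x).div_const 6)).congr_deriv (by norm_num; ring)
  refine ((hquad.log hD.ne').sub hcubic).congr_deriv ?_
  rw [div_sub' hD.ne', div_eq_div_iff hD.ne' (by positivity)]
  ring

lemma sub_cube_div_six_le_log (x : ℝ) (hx : -2 ≤ x) :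
    x - x ^ 3 / 6 ≤ log (1 + x + x ^ 2 / 2) := by
  set g : ℝ → ℝ := fun x => log (1 + x + x ^ 2 / 2) - (x - x ^ 3 / 6) with hg
  have hcont : Continuous g :=
    continuous_iff_continuousAt.2 fun x => (hasDerivAt_log_sub_cubic x).continuousAt
  have hg0 : g 0 = 0 := by simp [hg]
  suffices 0 ≤ g x by simpa [hg] using this
  rcases le_total 0 x with hx0 | hx0
  · have hmono : MonotoneOn g (Set.Ici 0) := by
      refine monotoneOn_of_hasDerivWithinAt_nonneg (convex_Ici 0) hcont.continuousOn
        (fun y _ => (hasDerivAt_log_sub_cubic y).hasDerivWithinAt) fun y hy => ?_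
      rw [interior_Ici, Set.mem_Ioi] at hy
      positivity
    simpa [hg0] using hmono Set.self_mem_Ici hx0 hx0
  · have hanti : AntitoneOn g (Set.Icc (-2) 0) := by
      refine antitoneOn_of_hasDerivWithinAt_nonpos (convex_Icc _ _) hcont.continuousOn
        (fun y _ => (hasDerivAt_log_sub_cubic y).hasDerivWithinAt) fun y hy => ?_
      obtain ⟨hy_gt, hy_lt⟩ : -2 < y ∧ y < 0 := by rwa [interior_Icc] at hy
      have := one_add_add_sq_div_two_pos y
      refine div_nonpos_of_nonpos_of_nonneg ?_ (by positivity)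
      exact mul_nonpos_of_nonpos_of_nonneg (Odd.pow_nonpos (by decide) hy_lt.le) (by linarith)
    simpa [hg0] using hanti ⟨hx, hx0⟩ ⟨by norm_num, le_rfl⟩ hx0

lemma phi_neg (u : ℝ) : phi (-u) = -phi u := by
  have hsqrt : 0 < √2 := by positivity
  unfold phi
  split_ifs <;> first | ring1 | (exfalso; linarith)

lemma phi_le_log (u : ℝ) : phi u ≤ log (1 + u + u ^ 2 / 2) := by
  have hsqrt_gt := one_lt_sqrt_two
  have hsqrt_le : √2 ≤ 2 := by rw [sqrt_le_left (by norm_num)]; norm_num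
  have hsq : √2 ^ 2 = 2 := sq_sqrt (by norm_num)
  have hcube : √2 ^ 3 = 2 * √2 := by rw [pow_succ, hsq]
  unfold phi
  split_ifs with hlt hle
  · have hfar : 0 < (u + √2) * (u + 2 - √2) := mul_pos_of_neg_of_neg (by linarith) (by linarith)
    calc -(2 * √2 / 3) = -√2 - (-√2) ^ 3 / 6 := by rw [neg_pow, hcube]; ring
      _ ≤ log (1 + -√2 + (-√2) ^ 2 / 2) := sub_cube_div_six_le_log _ (by linarith)
      _ ≤ log (1 + u + u ^ 2 / 2) :=
        log_le_log (one_add_add_sq_div_two_pos _) (by nlinarith)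
  · exact sub_cube_div_six_le_log u (by linarith)
  · have hfar : 0 < (u - √2) * (u + 2 + √2) := mul_pos (by linarith) (by linarith)
    calc 2 * √2 / 3 = √2 - √2 ^ 3 / 6 := by rw [hcube]; ring
      _ ≤ log (1 + √2 + √2 ^ 2 / 2) := sub_cube_div_six_le_log _ (by linarith)
      _ ≤ log (1 + u + u ^ 2 / 2) :=
        log_le_log (one_add_add_sq_div_two_pos _) (by nlinarith)

theorem catoni_phi_log_bounds (u : ℝ) :
    -Real.log (1 - u + u ^ 2 / 2) ≤ phi u ∧ phi u ≤ Real.log (1 + u + u ^ 2 / 2) := by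
  refine ⟨?_, phi_le_log u⟩
  have h := phi_le_log (-u)
  rw [phi_neg, neg_sq, ← sub_eq_add_neg] at h
  linarith
end

section
/- (Sensitivity of truncated linear-regression gradient step) Let data points (x̃ᵢ, ỹᵢ) ∈ ℝ^d × ℝ satisfy ‖x̃ᵢ‖_∞ ≤ K and |ỹᵢ| ≤ K, and let w ∈ ℝ^d be s-sparse with ‖w‖₂ ≤ 1. Then the map D ↦ w − (η₀/m)·Σ_{i=1}^m x̃ᵢ(⟨x̃ᵢ, w⟩ − ỹᵢ) has ℓ_∞-sensitivity at most (2K²η₀/m)·(√s + 1) with respect to changing one of the m samples. -/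
/-!
Only the `i₀`-th summands of the two gradients differ. Each of them is bounded coordinatewise
by `K (K ‖w‖₁ + K)`, and an `s`-sparse vector with `‖w‖₂ ≤ 1` has `‖w‖₁ ≤ √s` by Cauchy–Schwarz
on its support.
-/

open Finset

theorem sum_abs_le_sqrt_ncard_mul_sqrt_sum_sq {ι : Type*} [Fintype ι] (w : ι → ℝ) :
    ∑ j, |w j| ≤ √(Set.ncard {j | w j ≠ 0}) * √(∑ j, w j ^ 2) := by
  classical
  set T := univ.filter fun j => w j ≠ 0
  have hT : Set.ncard {j | w j ≠ 0} = #T := by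
    rw [Set.ncard_eq_toFinset_card']; congr 1; ext; simp [T]
  have hsum : ∑ j, |w j| = ∑ j ∈ T, |w j| := by
    rw [← sum_filter_ne_zero]; simp only [ne_eq, abs_eq_zero, T]
  have hsq : ∑ j ∈ T, |w j| ^ 2 ≤ ∑ j, w j ^ 2 := by
    simp only [sq_abs]
    exact sum_le_sum_of_subset_of_nonneg (subset_univ _) fun _ _ _ => sq_nonneg _
  rw [hsum, hT, ← Real.sqrt_mul (Nat.cast_nonneg _),
    Real.le_sqrt (sum_nonneg fun _ _ => abs_nonneg _) (by positivity)]
  exact sq_sum_le_card_mul_sum_sq.trans (mul_le_mul_of_nonneg_left hsq (Nat.cast_nonneg _))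

theorem sum_abs_le_sqrt_of_sparse {ι : Type*} [Fintype ι] {w : ι → ℝ} {s : ℕ}
    (hsparse : Set.ncard {j | w j ≠ 0} ≤ s) (hw : √(∑ j, w j ^ 2) ≤ 1) :
    ∑ j, |w j| ≤ √s :=
  calc ∑ j, |w j| ≤ √(Set.ncard {j | w j ≠ 0}) * √(∑ j, w j ^ 2) :=
        sum_abs_le_sqrt_ncard_mul_sqrt_sum_sq w
    _ ≤ √s * 1 := by gcongr
    _ = √s := mul_one _

section GradientTerm

variable {ι : Type*} [Fintype ι] {K : ℝ} {x w : ι → ℝ} {y : ℝ}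

theorem abs_sum_mul_le_of_abs_le (hx : ∀ k, |x k| ≤ K) :
    |∑ k, x k * w k| ≤ K * ∑ k, |w k| :=
  calc |∑ k, x k * w k| ≤ ∑ k, |x k| * |w k| := by
        simpa only [abs_mul] using abs_sum_le_sum_abs (fun k => x k * w k) univ
    _ ≤ ∑ k, K * |w k| := by gcongr with k; exact hx k
    _ = K * ∑ k, |w k| := (mul_sum ..).symm

theorem abs_mul_residual_le (hx : ∀ k, |x k| ≤ K) (hy : |y| ≤ K) (j : ι) :
    |x j * (∑ k, x k * w k - y)| ≤ K ^ 2 * (∑ k, |w k| + 1) := by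
  have hK : 0 ≤ K := (abs_nonneg y).trans hy
  calc |x j * (∑ k, x k * w k - y)| ≤ K * (K * ∑ k, |w k| + K) := by
        rw [abs_mul]
        gcongr
        · exact hx j
        · exact (abs_sub _ _).trans (add_le_add (abs_sum_mul_le_of_abs_le hx) hy)
    _ = K ^ 2 * (∑ k, |w k| + 1) := by ring

end GradientTerm

theorem Fintype.sum_sub_sum_eq_of_eq_of_ne {ι M : Type*} [Fintype ι] [AddCommGroup M]
    {f g : ι → M} (i₀ : ι) (h : ∀ i, i ≠ i₀ → f i = g i) :
    ∑ i, f i - ∑ i, g i = f i₀ - g i₀ := by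
  rw [← sum_sub_distrib, sum_eq_single i₀ fun i hi => sub_eq_zero.2 (h i hi)]

theorem truncated_gradient_step_sensitivity_general {d m : ℕ} (K η₀ : ℝ) (s : ℕ)
    (hη : 0 < η₀)
    (w : Fin d → ℝ) (hsparse : Set.ncard {j | w j ≠ 0} ≤ s)
    (hw : Real.sqrt (∑ j, w j ^ 2) ≤ 1)
    (X X' : Fin m → Fin d → ℝ) (Y Y' : Fin m → ℝ)
    (hX : ∀ i j, |X i j| ≤ K) (hX' : ∀ i j, |X' i j| ≤ K)
    (hY : ∀ i, |Y i| ≤ K) (hY' : ∀ i, |Y' i| ≤ K)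
    (i₀ : Fin m) (hneighbor : ∀ i, i ≠ i₀ → X i = X' i ∧ Y i = Y' i) :
    ‖(fun j => (w j - η₀ / m * ∑ i, X i j * ((∑ k, X i k * w k) - Y i)) -
        (w j - η₀ / m * ∑ i, X' i j * ((∑ k, X' i k * w k) - Y' i)))‖ ≤
      2 * K ^ 2 * η₀ / m * (Real.sqrt s + 1) := by
  have hl1 := sum_abs_le_sqrt_of_sparse hsparse hw
  refine (pi_norm_le_iff_of_nonneg (by positivity)).2 fun j => ?_
  have hterm := abs_mul_residual_le (w := w) (hX i₀) (hY i₀) j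
  have hterm' := abs_mul_residual_le (w := w) (hX' i₀) (hY' i₀) j
  have hsummands : ∀ i, i ≠ i₀ → X' i j * (∑ k, X' i k * w k - Y' i) =
      X i j * (∑ k, X i k * w k - Y i) := fun i hi => by
    rw [(hneighbor i hi).1, (hneighbor i hi).2]
  rw [Real.norm_eq_abs, sub_sub_sub_cancel_left, ← mul_sub, abs_mul,
    abs_of_nonneg (by positivity), Fintype.sum_sub_sum_eq_of_eq_of_ne i₀ hsummands]
  calc η₀ / m * |X' i₀ j * (∑ k, X' i₀ k * w k - Y' i₀) - X i₀ j * (∑ k, X i₀ k * w k - Y i₀)|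
      ≤ η₀ / m * (K ^ 2 * (∑ k, |w k| + 1) + K ^ 2 * (∑ k, |w k| + 1)) := by
        gcongr; exact (abs_sub _ _).trans (add_le_add hterm' hterm)
    _ ≤ η₀ / m * (K ^ 2 * (√s + 1) + K ^ 2 * (√s + 1)) := by gcongr
    _ = 2 * K ^ 2 * η₀ / m * (√s + 1) := by ring

/-- ℓ∞-sensitivity of the truncated linear-regression gradient step with respect
to changing one of the `m` samples (the norm on `Fin d → ℝ` is the sup norm). -/
theorem truncated_gradient_step_sensitivity {d m : ℕ} (hm : 0 < m) (K η₀ : ℝ) (s : ℕ)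
    (hK : 0 < K) (hη : 0 < η₀)
    (w : Fin d → ℝ) (hsparse : Set.ncard {j | w j ≠ 0} ≤ s)
    (hw : Real.sqrt (∑ j, w j ^ 2) ≤ 1)
    (X X' : Fin m → Fin d → ℝ) (Y Y' : Fin m → ℝ)
    (hX : ∀ i j, |X i j| ≤ K) (hX' : ∀ i j, |X' i j| ≤ K)
    (hY : ∀ i, |Y i| ≤ K) (hY' : ∀ i, |Y' i| ≤ K)
    (i₀ : Fin m) (hneighbor : ∀ i, i ≠ i₀ → X i = X' i ∧ Y i = Y' i) :
    ‖(fun j => (w j - η₀ / m * ∑ i, X i j * ((∑ k, X i k * w k) - Y i)) -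
        (w j - η₀ / m * ∑ i, X' i j * ((∑ k, X' i k * w k) - Y' i)))‖ ≤
      2 * K ^ 2 * η₀ / m * (Real.sqrt s + 1) :=
  truncated_gradient_step_sensitivity_general K η₀ s hη w hsparse hw X X' Y Y' hX hX' hY hY' i₀
    hneighbor
end

section
/- (Sparse packing via Gilbert–Varshamov) For any s ∈ [d] with s ≤ d (and s even, d − s ≥ s/2), consider H(s) = {z ∈ {−1,0,+1}^d : ‖z‖₀ = s} with Hamming distance ρ_H(z,z') = Σⱼ 1[zⱼ ≠ z'ⱼ]. There exists a subset H̃ ⊆ H(s) with |H̃| ≥ exp((s/2)·log((d−s)/(s/2))) such that ρ_H(z, z') ≥ s/2 for all distinct z, z' ∈ H̃. -/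
/-!
Gilbert–Varshamov. Write `s = 2t` and `d = 2t + m`. The vectors of `{-1, 0, 1}^d` with exactly
`2t` nonzero entries form the Hamming sphere of radius `2t` around `0`, of size
`C(d, 2t) 2^(2t)`. A maximal subfamily with pairwise distances `≥ t` covers that sphere by
Hamming balls of radius `< t`, each of size `∑_{k<t} C(d, k) 2^k ≤ t C(d, t-1) 2^(t-1)`; the
ratio of the two counts is at least `(m / t)^t`.
-/

open Finset Fintype

/-- A maximal `r`-free subset of `X` meets the `r`-neighbourhood of every point of `X`. -/
theorem Finset.exists_subset_pairwise_not_card_le_mul {β : Type*} (X : Finset β)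
    (r : β → β → Prop) [DecidableRel r] (hrefl : ∀ x, r x x)
    (hsymm : ∀ x y, r x y → r y x) (B : ℕ) (hB : ∀ z ∈ X, #{x ∈ X | r x z} ≤ B) :
    ∃ H ⊆ X, (H : Set β).Pairwise (fun x y => ¬ r x y) ∧ #X ≤ #H * B := by
  classical
  obtain ⟨H, hH, hmax⟩ := exists_max_image
    (X.powerset.filter fun H : Finset β => (H : Set β).Pairwise fun x y => ¬ r x y) card
    ⟨∅, by simp⟩
  rw [mem_filter, mem_powerset] at hH
  have hcover : ∀ x ∈ X, ∃ h ∈ H, r x h := by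
    intro x hx
    by_cases hxH : x ∈ H
    · exact ⟨x, hxH, hrefl x⟩
    by_contra! hfar
    have hins := hmax (insert x H) <| mem_filter.2 ⟨mem_powerset.2 (insert_subset hx hH.1), by
      rw [coe_insert, Set.pairwise_insert_of_notMem (by exact_mod_cast hxH)]
      exact ⟨hH.2, fun h hh => ⟨hfar h hh, fun hhx => hfar h hh (hsymm h x hhx)⟩⟩⟩
    rw [card_insert_of_notMem hxH] at hins
    omega
  refine ⟨H, hH.1, hH.2, ?_⟩
  calc #X ≤ #(H.biUnion fun h => {x ∈ X | r x h}) := card_le_card fun x hx => by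
        obtain ⟨h, hh, hxh⟩ := hcover x hx
        exact mem_biUnion.2 ⟨h, hh, mem_filter.2 ⟨hx, hxh⟩⟩
    _ ≤ #H * B := card_biUnion_le_card_mul _ _ _ fun h hh => hB h (hH.1 hh)

section Hamming

variable {ι α : Type*} [Fintype ι] [DecidableEq ι] [DecidableEq α]

theorem mem_piFinset_ite_erase_iff {S : Finset α} {z x : ι → α} (hz : ∀ i, z i ∈ S)
    (D : Finset ι) :
    x ∈ piFinset (fun i => if i ∈ D then S.erase (z i) else {z i}) ↔
      (∀ i, x i ∈ S) ∧ ({i | x i ≠ z i} : Finset ι) = D := by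
  simp only [mem_piFinset, Finset.ext_iff, mem_filter, mem_univ, true_and]
  refine ⟨fun h => ⟨fun i => ?_, fun i => ?_⟩, fun ⟨hS, hD⟩ i => ?_⟩
  · have := h i
    split_ifs at this with hi
    · exact mem_of_mem_erase this
    · rw [mem_singleton.1 this]; exact hz i
  · have := h i
    split_ifs at this with hi <;> simp_all
  · split_ifs with hi
    · exact mem_erase.2 ⟨(hD i).2 hi, hS i⟩
    · exact mem_singleton.2 (not_not.1 fun h => hi ((hD i).1 h))

theorem card_hammingSphere (S : Finset α) {z : ι → α} (hz : ∀ i, z i ∈ S) (k : ℕ) :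
    #{x ∈ piFinset fun _ => S | hammingDist x z = k} = (card ι).choose k * (#S - 1) ^ k := by
  rw [card_eq_sum_card_fiberwise (f := fun x => ({i | x i ≠ z i} : Finset ι))
    (t := powersetCard k univ) fun x hx => mem_powersetCard.2 ⟨subset_univ _, ?_⟩]
  have hfiber : ∀ D ∈ powersetCard k (univ : Finset ι),
      #{x ∈ {x ∈ piFinset fun _ => S | hammingDist x z = k} |
        ({i | x i ≠ z i} : Finset ι) = D} = (#S - 1) ^ k := by
    intro D hD
    rw [mem_powersetCard] at hD
    have : ({x ∈ {x ∈ piFinset fun _ => S | hammingDist x z = k} |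
        ({i | x i ≠ z i} : Finset ι) = D} : Finset (ι → α)) =
        piFinset (fun i => if i ∈ D then S.erase (z i) else {z i}) := by
      ext x
      rw [mem_piFinset_ite_erase_iff hz, mem_filter, mem_filter, mem_piFinset, hammingDist]
      constructor
      · rintro ⟨⟨hS, -⟩, hD'⟩; exact ⟨hS, hD'⟩
      · rintro ⟨hS, hD'⟩; exact ⟨⟨hS, hD' ▸ hD.2⟩, hD'⟩
    rw [this, card_piFinset]
    simp only [apply_ite card, card_erase_of_mem (hz _), card_singleton]
    rw [Fintype.prod_ite_mem, prod_const, hD.2]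
  · rw [sum_congr rfl hfiber, sum_const, card_powersetCard, card_univ, smul_eq_mul]
  · exact (mem_filter.1 hx).2

theorem card_hammingBall_le (S : Finset α) {z : ι → α} (hz : ∀ i, z i ∈ S) (r : ℕ) :
    #{x ∈ piFinset fun _ => S | hammingDist x z < r} ≤
      ∑ k ∈ range r, (card ι).choose k * (#S - 1) ^ k := by
  calc #{x ∈ piFinset fun _ => S | hammingDist x z < r}
      ≤ #((range r).biUnion fun k => {x ∈ piFinset fun _ => S | hammingDist x z = k}) :=
        card_le_card fun x hx => by
          rw [mem_filter] at hx
          exact mem_biUnion.2 ⟨_, mem_range.2 hx.2, mem_filter.2 ⟨hx.1, rfl⟩⟩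
    _ ≤ ∑ k ∈ range r, #{x ∈ piFinset fun _ => S | hammingDist x z = k} := card_biUnion_le
    _ = _ := sum_congr rfl fun k _ => card_hammingSphere S hz k

theorem exists_subset_hammingSphere_pairwise_le_hammingDist (S : Finset α) {z : ι → α}
    (hz : ∀ i, z i ∈ S) (k : ℕ) {t : ℕ} (ht : 0 < t) :
    ∃ H ⊆ ({x ∈ piFinset fun _ => S | hammingDist x z = k} : Finset (ι → α)),
      (H : Set (ι → α)).Pairwise (fun x y => t ≤ hammingDist x y) ∧
      (card ι).choose k * (#S - 1) ^ k ≤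
        #H * ∑ j ∈ range t, (card ι).choose j * (#S - 1) ^ j := by
  obtain ⟨H, hHX, hHsep, hXH⟩ :=
    exists_subset_pairwise_not_card_le_mul {x ∈ piFinset fun _ => S | hammingDist x z = k}
      (fun x y => hammingDist x y < t) (fun x => by simpa using ht)
      (fun x y h => hammingDist_comm x y ▸ h) _ fun y hy =>
        (card_le_card (filter_subset_filter _ (filter_subset _ _))).trans
          (card_hammingBall_le S (mem_piFinset.1 (mem_filter.1 hy).1) t)
  exact ⟨H, hHX, hHsep.mono' fun x y h => not_lt.1 h, card_hammingSphere S hz k ▸ hXH⟩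

end Hamming

theorem Set.ncard_setOf_ne_eq_hammingDist {ι : Type*} {β : ι → Type*} [Fintype ι]
    [∀ i, DecidableEq (β i)] (x y : ∀ i, β i) :
    {i | x i ≠ y i}.ncard = hammingDist x y := by
  rw [hammingDist, ← Set.ncard_coe_finset, coe_filter]; simp

namespace Nat

theorem choose_le_choose_of_le_half_left {n a b : ℕ} (hab : a ≤ b) (hb : b ≤ n / 2) :
    n.choose a ≤ n.choose b := by
  induction b, hab using Nat.le_induction with
  | base => rfl
  | succ k _ ih => exact (ih (by omega)).trans (choose_le_succ_of_lt_half_left (by omega))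

theorem sum_range_choose_mul_pow_le {n t a : ℕ} (ha : 0 < a) (ht : t - 1 ≤ n / 2) :
    ∑ k ∈ range t, n.choose k * a ^ k ≤ t * (n.choose (t - 1) * a ^ (t - 1)) := by
  simpa using sum_le_card_nsmul (range t) _ _ fun k hk =>
    Nat.mul_le_mul (choose_le_choose_of_le_half_left (by simp at hk; omega) ht)
      (Nat.pow_le_pow_right ha (by simp at hk; omega))

/-- The left side is twice the two leading terms of `(m + 1) ⋯ (m + t + 1)` as a polynomial
in `m`. -/
theorem pow_mul_le_two_mul_ascFactorial (m t : ℕ) :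
    m ^ t * (2 * m + (t + 1) * (t + 2)) ≤ 2 * (m + 1).ascFactorial (t + 1) := by
  induction t with
  | zero => simp [ascFactorial_succ]; omega
  | succ t ih =>
    have step :
        m * (2 * m + (t + 2) * (t + 3)) ≤ (2 * m + (t + 1) * (t + 2)) * (m + 1 + (t + 1)) :=
      calc _ ≤ m * (2 * m + (t + 2) * (t + 3)) + (t + 1) * (t + 2) ^ 2 := Nat.le_add_right _ _
        _ = _ := by ring
    rw [ascFactorial_succ]
    calc m ^ (t + 1) * (2 * m + (t + 1 + 1) * (t + 1 + 2))
        = m ^ t * (m * (2 * m + (t + 2) * (t + 3))) := by ring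
      _ ≤ m ^ t * ((2 * m + (t + 1) * (t + 2)) * (m + 1 + (t + 1))) := by gcongr
      _ = m ^ t * (2 * m + (t + 1) * (t + 2)) * (m + 1 + (t + 1)) := by ring
      _ ≤ 2 * (m + 1).ascFactorial (t + 1) * (m + 1 + (t + 1)) := by gcongr
      _ = 2 * ((m + 1 + (t + 1)) * (m + 1).ascFactorial (t + 1)) := by ring

/-- The sphere of radius `2t` in `{-1, 0, 1}^(2t + m)` has at least `(m / t)^t` times as many
points as the bound of `sum_range_choose_mul_pow_le` on a ball of radius `< t`. -/
theorem pow_mul_choose_sub_one_le (m t : ℕ) :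
    m ^ t * (t * ((2 * t + m).choose (t - 1) * 2 ^ (t - 1))) ≤
      t ^ t * ((2 * t + m).choose (2 * t) * 2 ^ (2 * t)) := by
  obtain _ | u := t
  · simp
  simp only [add_tsub_cancel_right]
  set n := 2 * (u + 1) + m
  have hchoose : n.choose (2 * (u + 1)) * (2 * (u + 1)).choose u =
      n.choose u * (m + u + 2).choose (u + 2) := by
    rw [Nat.choose_mul (by omega), show n - u = m + u + 2 by omega,
      show 2 * (u + 1) - u = u + 2 by omega]
  have hsmall : (u + 2)! * (2 * (u + 1)).choose u ≤ (u + 1) * (2 * (u + 1)) ^ (u + 1) := by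
    rw [show 2 * (u + 1) = u + (u + 2) by ring, choose_symm_add,
      ← descFactorial_eq_factorial_mul_choose, descFactorial_succ,
      show u + (u + 2) - (u + 1) = u + 1 by omega]
    exact Nat.mul_le_mul_left _ (descFactorial_le_pow _ _)
  have hlarge : (u + 1) ^ 2 * m ^ (u + 1) ≤ 2 * ((u + 2)! * (m + u + 2).choose (u + 2)) := by
    rw [← show m + (u + 2) = m + u + 2 by ring, ← ascFactorial_eq_factorial_mul_choose]
    calc (u + 1) ^ 2 * m ^ (u + 1) ≤ m ^ (u + 1) * (2 * m + (u + 1 + 1) * (u + 1 + 2)) := by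
          rw [mul_comm]; gcongr; nlinarith
      _ ≤ _ := pow_mul_le_two_mul_ascFactorial m (u + 1)
  have hpos : 0 < (u + 2)! * (2 * (u + 1)).choose u :=
    Nat.mul_pos (factorial_pos _) (choose_pos (by omega))
  refine Nat.le_of_mul_le_mul_right ?_ hpos
  calc m ^ (u + 1) * ((u + 1) * (n.choose u * 2 ^ u)) * ((u + 2)! * (2 * (u + 1)).choose u)
      ≤ m ^ (u + 1) * ((u + 1) * (n.choose u * 2 ^ u)) *
          ((u + 1) * (2 * (u + 1)) ^ (u + 1)) := by gcongr
    _ = n.choose u * 2 ^ (2 * u + 1) * (u + 1) ^ (u + 1) * ((u + 1) ^ 2 * m ^ (u + 1)) := by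
        rw [mul_pow]; ring
    _ ≤ n.choose u * 2 ^ (2 * u + 1) * (u + 1) ^ (u + 1) *
          (2 * ((u + 2)! * (m + u + 2).choose (u + 2))) := by gcongr
    _ = (u + 1) ^ (u + 1) * 2 ^ (2 * (u + 1)) * (u + 2)! *
          (n.choose u * (m + u + 2).choose (u + 2)) := by ring
    _ = (u + 1) ^ (u + 1) * (n.choose (2 * (u + 1)) * 2 ^ (2 * (u + 1))) *
          ((u + 2)! * (2 * (u + 1)).choose u) := by rw [← hchoose]; ring

end Nat

/-- Gilbert–Varshamov type sparse packing: there is a family of `s`-sparse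
sign vectors of cardinality at least `exp((s/2) log((d−s)/(s/2)))` with pairwise
Hamming distance at least `s/2`. -/
theorem sparse_packing (d s : ℕ) (hs : 0 < s) (hsd : s ≤ d) (heven : Even s)
    (hgap : (s : ℝ) / 2 ≤ (d : ℝ) - s) :
    ∃ H : Finset (Fin d → ℝ),
      (∀ z ∈ H, (∀ j, z j = -1 ∨ z j = 0 ∨ z j = 1) ∧ Set.ncard {j | z j ≠ 0} = s) ∧
      Real.exp ((s : ℝ) / 2 * Real.log (((d : ℝ) - s) / ((s : ℝ) / 2))) ≤ (H.card : ℝ) ∧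
      ∀ z ∈ H, ∀ z' ∈ H, z ≠ z' →
        (s : ℝ) / 2 ≤ (Set.ncard {j | z j ≠ z' j} : ℝ) := by
  obtain ⟨t, rfl⟩ := heven.two_dvd
  obtain ⟨m, rfl⟩ := Nat.exists_eq_add_of_le hsd
  push_cast at hgap ⊢
  rw [show (2 * t : ℝ) / 2 = t by ring, show (2 * t + m : ℝ) - 2 * t = m by ring] at *
  have ht : 0 < t := by omega
  have hm : 0 < m := by exact_mod_cast ht.trans_le (by exact_mod_cast hgap)
  set S : Finset ℝ := {-1, 0, 1}
  obtain ⟨H, hHX, hHsep, hcard⟩ := exists_subset_hammingSphere_pairwise_le_hammingDist S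
    (z := (0 : Fin (2 * t + m) → ℝ)) (by simp [S]) (2 * t) ht
  rw [show #S - 1 = 2 by norm_num [S], Fintype.card_fin] at hcard
  have hcount : m ^ t ≤ t ^ t * #H := by
    have hball_pos : 0 < ∑ k ∈ range t, (2 * t + m).choose k * 2 ^ k :=
      sum_pos (fun k hk => Nat.mul_pos (Nat.choose_pos (by simp at hk; omega)) (by positivity))
        (nonempty_range_iff.2 ht.ne')
    refine Nat.le_of_mul_le_mul_right ?_ hball_pos
    calc m ^ t * ∑ k ∈ range t, (2 * t + m).choose k * 2 ^ k
        ≤ m ^ t * (t * ((2 * t + m).choose (t - 1) * 2 ^ (t - 1))) := by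
          gcongr; exact Nat.sum_range_choose_mul_pow_le two_pos (by omega)
      _ ≤ t ^ t * ((2 * t + m).choose (2 * t) * 2 ^ (2 * t)) := Nat.pow_mul_choose_sub_one_le m t
      _ ≤ t ^ t * #H * ∑ k ∈ range t, (2 * t + m).choose k * 2 ^ k := by
          rw [mul_assoc]; gcongr
  refine ⟨H, fun z hz => ?_, ?_, fun z hz z' hz' hne => ?_⟩
  · obtain ⟨hzS, hz0⟩ := mem_filter.1 (hHX hz)
    exact ⟨fun j => by simpa [S] using mem_piFinset.1 hzS j,
      (Set.ncard_setOf_ne_eq_hammingDist z 0).trans hz0⟩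
  · rw [← Real.log_pow, Real.exp_log (by positivity), div_pow, div_le_iff₀ (by positivity)]
    exact_mod_cast hcount.trans_eq (mul_comm _ _)
  · rw [Set.ncard_setOf_ne_eq_hammingDist]
    exact_mod_cast hHsep hz hz' hne
end
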